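/- Primal optimum from the dual minimizer: in the setting of the KL-regularized occupancy optimization (finite S and A, transition kernel P, initial distribution ρ₀, discount 0 < γ < 1, reward R : S × A → ℝ, reference distribution d_O > 0, strict feasibility of the Bellman flow constraint set F), suppose V* : S → ℝ attains the infimum of the dual objective V ↦ (1−γ)·Σ_s ρ₀(s)·V(s) + log( Σ_{(s,a)} d_O(s,a)·exp(δ_V(s,a)) ), where δ_V(s,a) = R(s,a) + γ·Σ_{s'} P(s'|s,a)·V(s') − V(s). Define d*(s,a) = d_O(s,a)·exp(δ_{V*}(s,a)) / Σ_{(s',a')} d_O(s',a')·exp(δ_{V*}(s',a')). Then d* satisfies the Bellman flow constraints (d* ∈ F) and Σ_{(s,a)} d*(s,a)·R(s,a) − D_KL(d* ‖ d_O) equals the dual objective value at V*; consequently d* attains the primal supremum. -/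

import Mathlib

/-!
For an occupancy `d` satisfying the flow constraints, `∑ d R = (1 - γ) ⟨ρ₀, V⟩ + ∑ d δ_V` for every
`V`, so the primal objective of `d` is `(1 - γ) ⟨ρ₀, V⟩ + (∑ d δ_V - KL(d ‖ d_O))`. By Gibbs'
variational inequality the bracket is at most `log ∑ d_O exp δ_V`, with equality at the exponential
tilt of `d_O` by `δ_V`: this is weak duality, tight as soon as the tilt is feasible. At a minimizer
`V*` it is: the derivative of the dual objective at `V*` in a direction `U` is
`(1 - γ) ⟨ρ₀, U⟩ - ∑ d* (U - γ P U)`, and its vanishing for all `U` is the weak form of the flow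
constraints for `d*`.
-/

open Real Finset

section Gibbs

variable {ι : Type*} [Fintype ι]

lemma mul_log_div_le_sub {d x : ℝ} (hd : 0 ≤ d) (hx : 0 < x) : d * log (x / d) ≤ x - d := by
  rcases hd.eq_or_lt with rfl | hd
  · simpa using hx.le
  · calc d * log (x / d) ≤ d * (x / d - 1) :=
          mul_le_mul_of_nonneg_left (log_le_sub_one_of_pos (div_pos hx hd)) hd.le
      _ = x - d := by field_simp

lemma sum_mul_log_div_le_log_sum [Nonempty ι] {d w : ι → ℝ} (hd0 : ∀ i, 0 ≤ d i)
    (hd1 : ∑ i, d i = 1) (hw : ∀ i, 0 < w i) :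
    ∑ i, d i * log (w i / d i) ≤ log (∑ i, w i) := by
  set Z := ∑ i, w i
  have hZ : 0 < Z := sum_pos (fun i _ => hw i) univ_nonempty
  have hsplit : ∀ i, d i * log (w i / d i) = d i * log (w i / Z / d i) + d i * log Z := by
    intro i
    rcases (hd0 i).eq_or_lt with h | h
    · simp [← h]
    · rw [div_right_comm, log_div (div_pos (hw i) h).ne' hZ.ne']
      ring
  calc ∑ i, d i * log (w i / d i)
      = ∑ i, d i * log (w i / Z / d i) + log Z := by
        rw [sum_congr rfl fun i _ => hsplit i, sum_add_distrib, ← sum_mul, hd1, one_mul]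
    _ ≤ ∑ i, (w i / Z - d i) + log Z := by
        gcongr with i
        exact mul_log_div_le_sub (hd0 i) (div_pos (hw i) hZ)
    _ = log Z := by
        rw [sum_sub_distrib, ← sum_div, div_self hZ.ne', hd1, sub_self, zero_add]

lemma sum_mul_sub_sum_mul_log_div_le [Nonempty ι] {d w : ι → ℝ} (hd0 : ∀ i, 0 ≤ d i)
    (hd1 : ∑ i, d i = 1) (hw : ∀ i, 0 < w i) (a : ι → ℝ) :
    ∑ i, d i * a i - ∑ i, d i * log (d i / w i) ≤ log (∑ i, w i * exp (a i)) := by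
  have hterm : ∀ i, d i * a i - d i * log (d i / w i) = d i * log (w i * exp (a i) / d i) := by
    intro i
    rcases (hd0 i).eq_or_lt with h | h
    · simp [← h]
    · rw [log_div (mul_pos (hw i) (exp_pos _)).ne' h.ne', log_mul (hw i).ne' (exp_pos _).ne',
        log_exp, log_div h.ne' (hw i).ne']
      ring
  rw [← sum_sub_distrib, sum_congr rfl fun i _ => hterm i]
  exact sum_mul_log_div_le_log_sum hd0 hd1 fun i => mul_pos (hw i) (exp_pos _)

noncomputable def tilted (w a : ι → ℝ) (i : ι) : ℝ :=
  w i * exp (a i) / ∑ j, w j * exp (a j)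

variable [Nonempty ι] {w : ι → ℝ}

lemma sum_mul_exp_pos (hw : ∀ i, 0 < w i) (a : ι → ℝ) : 0 < ∑ i, w i * exp (a i) :=
  sum_pos (fun i _ => mul_pos (hw i) (exp_pos _)) univ_nonempty

lemma tilted_pos (hw : ∀ i, 0 < w i) (a : ι → ℝ) (i : ι) : 0 < tilted w a i :=
  div_pos (mul_pos (hw i) (exp_pos _)) (sum_mul_exp_pos hw a)

lemma sum_tilted (hw : ∀ i, 0 < w i) (a : ι → ℝ) : ∑ i, tilted w a i = 1 := by
  simp only [tilted]
  rw [← sum_div, div_self (sum_mul_exp_pos hw a).ne']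

lemma sum_tilted_mul_sub_sum_tilted_mul_log_div (hw : ∀ i, 0 < w i) (a : ι → ℝ) :
    ∑ i, tilted w a i * a i - ∑ i, tilted w a i * log (tilted w a i / w i)
      = log (∑ i, w i * exp (a i)) := by
  have hlog : ∀ i, log (tilted w a i / w i) = a i - log (∑ j, w j * exp (a j)) := by
    intro i
    rw [tilted, div_right_comm, mul_div_cancel_left₀ _ (hw i).ne',
      log_div (exp_pos _).ne' (sum_mul_exp_pos hw a).ne', log_exp]
  simp only [hlog, mul_sub, sum_sub_distrib, ← sum_mul, sum_tilted hw, one_mul, sub_sub_cancel]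

lemma hasDerivAt_log_sum_mul_exp_add_mul (hw : ∀ i, 0 < w i) (a c : ι → ℝ) :
    HasDerivAt (fun t => log (∑ i, w i * exp (a i + t * c i))) (∑ i, tilted w a i * c i) 0 := by
  have hsum : HasDerivAt (fun t => ∑ i, w i * exp (a i + t * c i))
      (∑ i, w i * exp (a i) * c i) 0 := by
    refine HasDerivAt.fun_sum fun i _ => ?_
    simpa [mul_assoc] using (((hasDerivAt_mul_const (c i)).const_add (a i)).exp.const_mul (w i) :
      HasDerivAt _ _ (0 : ℝ))
  convert hsum.log (by simpa using (sum_mul_exp_pos hw a).ne') using 1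
  simp only [tilted, div_mul_eq_mul_div, ← sum_div, zero_mul, add_zero]

end Gibbs

section Occupancy

variable {S A : Type*} [Fintype S] (P : S × A → S → ℝ) (ρ₀ : S → ℝ) (γ : ℝ) (R dO : S × A → ℝ)

def tdError (V : S → ℝ) (p : S × A) : ℝ :=
  R p + γ * ∑ s', P p s' * V s' - V p.1

lemma tdError_add_smul (V U : S → ℝ) (t : ℝ) (p : S × A) :
    tdError P γ R (V + t • U) p
      = tdError P γ R V p + t * -(U p.1 - γ * ∑ s', P p s' * U s') := by
  simp only [tdError, Pi.add_apply, Pi.smul_apply, smul_eq_mul, mul_add, sum_add_distrib,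
    mul_left_comm _ t, ← mul_sum]
  ring

variable [Fintype A]

def IsBellmanFlow (d : S × A → ℝ) : Prop :=
  ∀ s, ∑ a, d (s, a) = (1 - γ) * ρ₀ s + γ * ∑ p : S × A, P p s * d p

noncomputable def dualObjective (V : S → ℝ) : ℝ :=
  (1 - γ) * ∑ s, ρ₀ s * V s + log (∑ p, dO p * exp (tdError P γ R V p))

noncomputable def primalObjective (d : S × A → ℝ) : ℝ :=
  ∑ p, d p * R p - ∑ p, d p * log (d p / dO p)

lemma sum_mul_sub_discounted_eq (d : S × A → ℝ) (U : S → ℝ) :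
    ∑ p : S × A, d p * (U p.1 - γ * ∑ s', P p s' * U s')
      = ∑ s, U s * (∑ a, d (s, a) - γ * ∑ p : S × A, P p s * d p) := by
  simp only [mul_sub, sum_sub_distrib, mul_sum]
  congr 1
  · rw [Fintype.sum_prod_type]
    exact sum_congr rfl fun s _ => sum_congr rfl fun a _ => mul_comm _ _
  · rw [sum_comm]
    exact sum_congr rfl fun s _ => sum_congr rfl fun p _ => by ring

variable {P ρ₀ γ R}

theorem isBellmanFlow_iff_forall {d : S × A → ℝ} :
    IsBellmanFlow P ρ₀ γ d ↔ ∀ U : S → ℝ,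
      ∑ p : S × A, d p * (U p.1 - γ * ∑ s', P p s' * U s') = (1 - γ) * ∑ s, ρ₀ s * U s := by
  classical
  simp only [sum_mul_sub_discounted_eq]
  constructor
  · intro hd U
    rw [mul_sum]
    exact sum_congr rfl fun s _ => by rw [hd s]; ring
  · intro h s
    have := h fun s' => if s' = s then 1 else 0
    simp only [ite_mul, one_mul, zero_mul, mul_ite, mul_one, mul_zero, Fintype.sum_ite_eq'] at this
    linarith

lemma IsBellmanFlow.sum_eq_one (hP1 : ∀ p, ∑ s', P p s' = 1) (hρ1 : ∑ s, ρ₀ s = 1)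
    (hγ1 : γ < 1) {d : S × A → ℝ} (hd : IsBellmanFlow P ρ₀ γ d) : ∑ p, d p = 1 := by
  have := isBellmanFlow_iff_forall.1 hd 1
  simp only [Pi.one_apply, mul_one, hP1, hρ1, ← sum_mul] at this
  exact mul_left_cancel₀ (sub_ne_zero.2 hγ1.ne') (by linarith)

lemma IsBellmanFlow.sum_mul_tdError {d : S × A → ℝ} (hd : IsBellmanFlow P ρ₀ γ d)
    (V : S → ℝ) :
    ∑ p, d p * tdError P γ R V p = ∑ p, d p * R p - (1 - γ) * ∑ s, ρ₀ s * V s := by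
  rw [← isBellmanFlow_iff_forall.1 hd V, ← sum_sub_distrib]
  exact sum_congr rfl fun p _ => by rw [tdError]; ring

end Occupancy

section Duality

variable {S A : Type*} [Fintype S] [Fintype A] [Nonempty S] [Nonempty A]
  {P : S × A → S → ℝ} {ρ₀ : S → ℝ} {γ : ℝ} (R : S × A → ℝ) {dO : S × A → ℝ}

theorem primalObjective_le_dualObjective (hP1 : ∀ p, ∑ s', P p s' = 1)
    (hρ1 : ∑ s, ρ₀ s = 1) (hγ1 : γ < 1) (hO0 : ∀ p, 0 < dO p) {d : S × A → ℝ}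
    (hd0 : ∀ p, 0 ≤ d p) (hd : IsBellmanFlow P ρ₀ γ d) (V : S → ℝ) :
    primalObjective R dO d ≤ dualObjective P ρ₀ γ R dO V := by
  have hgibbs := sum_mul_sub_sum_mul_log_div_le hd0 (hd.sum_eq_one hP1 hρ1 hγ1) hO0
    (tdError P γ R V)
  rw [hd.sum_mul_tdError] at hgibbs
  rw [primalObjective, dualObjective]
  linarith

theorem primalObjective_tilted_eq_dualObjective (hO0 : ∀ p, 0 < dO p) (V : S → ℝ)
    (hflow : IsBellmanFlow P ρ₀ γ (tilted dO (tdError P γ R V))) :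
    primalObjective R dO (tilted dO (tdError P γ R V)) = dualObjective P ρ₀ γ R dO V := by
  have hgibbs := sum_tilted_mul_sub_sum_tilted_mul_log_div hO0 (tdError P γ R V)
  rw [hflow.sum_mul_tdError] at hgibbs
  rw [primalObjective, dualObjective]
  linarith

lemma hasDerivAt_dualObjective_add_smul (hO0 : ∀ p, 0 < dO p) (V U : S → ℝ) :
    HasDerivAt (fun t : ℝ => dualObjective P ρ₀ γ R dO (V + t • U))
      ((1 - γ) * ∑ s, ρ₀ s * U s
        - ∑ p, tilted dO (tdError P γ R V) p * (U p.1 - γ * ∑ s', P p s' * U s')) 0 := by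
  have hlin : HasDerivAt (fun t : ℝ => (1 - γ) * ∑ s, ρ₀ s * V s + t * ((1 - γ) * ∑ s, ρ₀ s * U s))
      ((1 - γ) * ∑ s, ρ₀ s * U s) 0 :=
    (hasDerivAt_mul_const _).const_add _
  have hlog := hasDerivAt_log_sum_mul_exp_add_mul hO0 (tdError P γ R V)
    fun p => -(U p.1 - γ * ∑ s', P p s' * U s')
  have hline : (fun t : ℝ => dualObjective P ρ₀ γ R dO (V + t • U))
      = fun t => ((1 - γ) * ∑ s, ρ₀ s * V s + t * ((1 - γ) * ∑ s, ρ₀ s * U s))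
        + log (∑ p, dO p * exp (tdError P γ R V p + t * -(U p.1 - γ * ∑ s', P p s' * U s'))) := by
    funext t
    simp only [dualObjective, tdError_add_smul, Pi.add_apply, Pi.smul_apply, smul_eq_mul, mul_add,
      sum_add_distrib, mul_left_comm _ t, ← mul_sum]
  rw [hline]
  refine (hlin.add hlog).congr_deriv ?_
  simp only [mul_neg, sum_neg_distrib, sub_eq_add_neg]

theorem isBellmanFlow_tilted_of_minimizer (hO0 : ∀ p, 0 < dO p) {V : S → ℝ}
    (hV : ∀ V', dualObjective P ρ₀ γ R dO V ≤ dualObjective P ρ₀ γ R dO V') :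
    IsBellmanFlow P ρ₀ γ (tilted dO (tdError P γ R V)) := by
  refine isBellmanFlow_iff_forall.2 fun U => ?_
  have hmin : IsLocalMin (fun t : ℝ => dualObjective P ρ₀ γ R dO (V + t • U)) 0 :=
    Filter.Eventually.of_forall fun t => by simpa using hV (V + t • U)
  have := hmin.hasDerivAt_eq_zero (hasDerivAt_dualObjective_add_smul R hO0 V U)
  linarith

end Duality

theorem primal_optimum_from_dual_minimizer_general
    {S A : Type*} [Fintype S] [Fintype A] [Nonempty S] [Nonempty A]
    (P : S × A → S → ℝ) (hP1 : ∀ p : S × A, ∑ s' : S, P p s' = 1)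
    (ρ₀ : S → ℝ) (hρ1 : ∑ s : S, ρ₀ s = 1)
    (γ : ℝ) (hγ1 : γ < 1)
    (R : S × A → ℝ)
    (dO : S × A → ℝ) (hO0 : ∀ p, 0 < dO p)
    -- the dual objective, with TD error `δ_V(s,a) = R(s,a) + γ ⟨P(·|s,a), V⟩ − V(s)`
    (dual : (S → ℝ) → ℝ)
    (hdual : ∀ V : S → ℝ,
      dual V = (1 - γ) * (∑ s : S, ρ₀ s * V s)
          + Real.log (∑ p : S × A, dO p *
              Real.exp (R p + γ * (∑ s' : S, P p s' * V s') - V p.1)))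
    -- `V*` attains the infimum of the dual objective
    (Vstar : S → ℝ) (hVstar : ∀ V : S → ℝ, dual Vstar ≤ dual V)
    -- the softmax-tilted occupancy induced by `V*`
    (dstar : S × A → ℝ)
    (hdstar : ∀ p : S × A,
      dstar p = dO p * Real.exp (R p + γ * (∑ s' : S, P p s' * Vstar s') - Vstar p.1)
        / ∑ p' : S × A, dO p' *
            Real.exp (R p' + γ * (∑ s' : S, P p' s' * Vstar s') - Vstar p'.1)) :
    ((∀ p, 0 ≤ dstar p) ∧
      (∀ s : S, ∑ a : A, dstar (s, a)
          = (1 - γ) * ρ₀ s + γ * ∑ p : S × A, P p s * dstar p)) ∧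
    ((∑ p : S × A, dstar p * R p) - (∑ p : S × A, dstar p * Real.log (dstar p / dO p))
        = dual Vstar) ∧
    (∀ d : S × A → ℝ, (∀ p, 0 ≤ d p) →
      (∀ s : S, ∑ a : A, d (s, a)
          = (1 - γ) * ρ₀ s + γ * ∑ p : S × A, P p s * d p) →
      (∑ p : S × A, d p * R p) - (∑ p : S × A, d p * Real.log (d p / dO p))
        ≤ (∑ p : S × A, dstar p * R p)
            - ∑ p : S × A, dstar p * Real.log (dstar p / dO p)) := by
  obtain rfl : dual = dualObjective P ρ₀ γ R dO := funext hdual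
  obtain rfl : dstar = tilted dO (tdError P γ R Vstar) := funext hdstar
  have hflow : IsBellmanFlow P ρ₀ γ (tilted dO (tdError P γ R Vstar)) :=
    isBellmanFlow_tilted_of_minimizer R hO0 hVstar
  have hvalue := primalObjective_tilted_eq_dualObjective R hO0 Vstar hflow
  refine ⟨⟨fun p => (tilted_pos hO0 _ p).le, hflow⟩, hvalue, fun d hd0 hd => ?_⟩
  change primalObjective R dO d ≤ primalObjective R dO _
  exact hvalue ▸ primalObjective_le_dualObjective R hP1 hρ1 hγ1 hO0 hd0 hd Vstar

/-- Primal optimum from the dual minimizer: if `V*` minimizes the log-sum-exp dual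
objective, then the softmax occupancy `d*(s,a) ∝ d_O(s,a) exp(δ_{V*}(s,a))` is
flow-feasible, its KL-regularized expected reward equals the dual value at `V*`,
and `d*` attains the primal supremum. -/
theorem primal_optimum_from_dual_minimizer
    {S A : Type*} [Fintype S] [Fintype A] [Nonempty S] [Nonempty A]
    (P : S × A → S → ℝ) (hP0 : ∀ p s', 0 ≤ P p s') (hP1 : ∀ p : S × A, ∑ s' : S, P p s' = 1)
    (ρ₀ : S → ℝ) (hρ0 : ∀ s, 0 ≤ ρ₀ s) (hρ1 : ∑ s : S, ρ₀ s = 1)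
    (γ : ℝ) (hγ0 : 0 < γ) (hγ1 : γ < 1)
    (R : S × A → ℝ)
    (dO : S × A → ℝ) (hO0 : ∀ p, 0 < dO p) (hO1 : ∑ p : S × A, dO p = 1)
    (hfeas : ∃ d : S × A → ℝ, (∀ p, 0 < d p) ∧
      (∀ s : S, ∑ a : A, d (s, a)
          = (1 - γ) * ρ₀ s + γ * ∑ p : S × A, P p s * d p))
    -- the dual objective, with TD error `δ_V(s,a) = R(s,a) + γ ⟨P(·|s,a), V⟩ − V(s)`
    (dual : (S → ℝ) → ℝ)
    (hdual : ∀ V : S → ℝ,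
      dual V = (1 - γ) * (∑ s : S, ρ₀ s * V s)
          + Real.log (∑ p : S × A, dO p *
              Real.exp (R p + γ * (∑ s' : S, P p s' * V s') - V p.1)))
    -- `V*` attains the infimum of the dual objective
    (Vstar : S → ℝ) (hVstar : ∀ V : S → ℝ, dual Vstar ≤ dual V)
    -- the softmax-tilted occupancy induced by `V*`
    (dstar : S × A → ℝ)
    (hdstar : ∀ p : S × A,
      dstar p = dO p * Real.exp (R p + γ * (∑ s' : S, P p s' * Vstar s') - Vstar p.1)
        / ∑ p' : S × A, dO p' *
            Real.exp (R p' + γ * (∑ s' : S, P p' s' * Vstar s') - Vstar p'.1)) :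
    ((∀ p, 0 ≤ dstar p) ∧
      (∀ s : S, ∑ a : A, dstar (s, a)
          = (1 - γ) * ρ₀ s + γ * ∑ p : S × A, P p s * dstar p)) ∧
    ((∑ p : S × A, dstar p * R p) - (∑ p : S × A, dstar p * Real.log (dstar p / dO p))
        = dual Vstar) ∧
    (∀ d : S × A → ℝ, (∀ p, 0 ≤ d p) →
      (∀ s : S, ∑ a : A, d (s, a)
          = (1 - γ) * ρ₀ s + γ * ∑ p : S × A, P p s * d p) →
      (∑ p : S × A, d p * R p) - (∑ p : S × A, d p * Real.log (d p / dO p))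
        ≤ (∑ p : S × A, dstar p * R p)
            - ∑ p : S × A, dstar p * Real.log (dstar p / dO p)) :=
  primal_optimum_from_dual_minimizer_general P hP1 ρ₀ hρ1 γ hγ1 R dO hO0 dual hdual Vstar hVstar
    dstar hdstar
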